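/- The formal power series identity Π_{m ≥ 1} (1 − q^m) = Σ_{j ∈ ℤ} (−1)^j q^{(3j² + j)/2} holds in the ring of formal power series over ℤ. -/

import Mathlib

/-!
The identity is Mathlib's pentagonal number theorem
`PowerSeries.coeff_prod_one_sub_X_pow_eventually_eq`. Modulo `X ^ (n + 1)` every factor
`1 - X ^ m` with `m > n` is congruent to `1`, so the coefficient of `X ^ n` in
`∏_{m ≤ n + 1} (1 - X ^ m)` is already that of the infinite product. Writing the pentagonal
exponent `(3j² + j)/2` as `pentagonal (-j)`, the coefficient of the pentagonal series is the sum
over `j`, and the cut-off `|j| ≤ n` loses no term since `|k| ≤ pentagonal k`.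
-/

open Finset PowerSeries

theorem natAbs_le_pentagonal (k : ℤ) : k.natAbs ≤ pentagonal k := by
  have h := two_mul_natCast_pentagonal k
  zify
  rcases le_or_gt 0 k with hk | hk
  · rw [abs_of_nonneg hk]
    nlinarith
  · rw [abs_of_neg hk]
    nlinarith

theorem pentagonal_neg_eq_iff {j : ℤ} {n : ℕ} : pentagonal (-j) = n ↔ 3 * j ^ 2 + j = 2 * n := by
  have h := two_mul_natCast_pentagonal_neg j
  constructor
  · rintro rfl
    linarith
  · intro hj
    have : (pentagonal (-j) : ℤ) = n := by linarith
    exact_mod_cast this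

namespace PowerSeries

variable {R : Type*} [CommRing R]

theorem coeff_eq_of_sModEq_X_pow {n m : ℕ} {f g : R⟦X⟧}
    (h : f ≡ g [SMOD Ideal.span {(X : R⟦X⟧) ^ n}]) (hm : m < n) : coeff m f = coeff m g := by
  rw [SModEq.sub_mem, Ideal.mem_span_singleton, X_pow_dvd_iff] at h
  simpa [sub_eq_zero] using h m hm

theorem one_sub_X_pow_sModEq_one {n m : ℕ} (h : n ≤ m) :
    (1 - X ^ m : R⟦X⟧) ≡ 1 [SMOD Ideal.span {(X : R⟦X⟧) ^ n}] := by
  rw [SModEq.sub_mem, Ideal.mem_span_singleton, sub_sub_cancel_left, dvd_neg]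
  exact pow_dvd_pow X h

theorem coeff_prod_one_sub_X_pow_of_range_subset {n : ℕ} {s : Finset ℕ}
    (hs : range (n + 1) ⊆ s) :
    coeff n (∏ m ∈ s, (1 - X ^ (m + 1) : R⟦X⟧)) =
      coeff n (∏ m ∈ range (n + 1), (1 - X ^ (m + 1) : R⟦X⟧)) := by
  have hmod : ∏ m ∈ s, (1 - X ^ (m + 1) : R⟦X⟧) ≡
      ∏ m ∈ s, (if m ∈ range (n + 1) then 1 - X ^ (m + 1) else 1)
        [SMOD Ideal.span {(X : R⟦X⟧) ^ (n + 1)}] := by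
    refine SModEq.prod fun m _ => ?_
    split_ifs with hm
    · exact SModEq.rfl
    · exact one_sub_X_pow_sModEq_one (by rw [mem_range] at hm; omega)
  rw [coeff_eq_of_sModEq_X_pow hmod n.lt_succ_self, prod_ite_mem, inter_eq_right.mpr hs]

theorem coeff_prod_range_one_sub_X_pow (n : ℕ) :
    coeff n (∏ m ∈ range (n + 1), (1 - X ^ (m + 1) : R⟦X⟧)) = coeff n (pentagonalSeries R) := by
  obtain ⟨s, hs⟩ := Filter.eventually_atTop.mp (coeff_prod_one_sub_X_pow_eventually_eq R n)
  rw [← hs (s ∪ range (n + 1)) subset_union_left,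
    coeff_prod_one_sub_X_pow_of_range_subset subset_union_right]

theorem coeff_pentagonalSeries_eq_sum (n : ℕ) :
    coeff n (pentagonalSeries R) =
      ∑ k ∈ Icc (-(n : ℤ)) n, if pentagonal k = n then (-1 : R) ^ k.natAbs else 0 := by
  by_cases hn : n ∈ Set.range pentagonal
  · obtain ⟨k₀, rfl⟩ := hn
    have hk₀ : k₀ ∈ Icc (-(pentagonal k₀ : ℤ)) (pentagonal k₀) := by
      have := natAbs_le_pentagonal k₀
      rw [mem_Icc]
      omega
    simp_rw [coeff_pentagonalSeries_pentagonal, Int.coe_negOnePow, pentagonal_inj,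
      sum_ite_eq', if_pos hk₀]
  · rw [coeff_pentagonalSeries_eq_zero R hn]
    exact (sum_eq_zero fun k _ => if_neg fun hk => hn ⟨k, hk⟩).symm

end PowerSeries

open PowerSeries in
/-- Euler's pentagonal number theorem, stated coefficientwise: for each `n`, the
`q^n`-coefficient of `∏_{m=1}^{n+1} (1 - q^m)` (which agrees with the coefficient
of the infinite product `∏_{m ≥ 1} (1 - q^m)`) equals the sum of `(-1)^j` over the
integers `j` with `(3j² + j)/2 = n`. -/
theorem stmt_10 (n : ℕ) :
    PowerSeries.coeff n (∏ m ∈ Finset.Icc 1 (n + 1), (1 - (X : PowerSeries ℤ) ^ m)) =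
      ∑ j ∈ Finset.Icc (-(n : ℤ)) (n : ℤ),
        if 3 * j ^ 2 + j = 2 * (n : ℤ) then (-1 : ℤ) ^ j.natAbs else 0 := by
  have hshift : ∏ m ∈ Icc 1 (n + 1), (1 - X ^ m : ℤ⟦X⟧) =
      ∏ m ∈ range (n + 1), (1 - X ^ (m + 1)) := by
    rw [range_eq_Ico, prod_Ico_add' (fun m => 1 - X ^ m), zero_add, Ico_add_one_right_eq_Icc]
  rw [hshift, coeff_prod_range_one_sub_X_pow, coeff_pentagonalSeries_eq_sum]
  have hneg : ∀ k ∈ Icc (-(n : ℤ)) n, -k ∈ Icc (-(n : ℤ)) n := fun k hk => by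
    rw [mem_Icc] at hk ⊢
    omega
  refine sum_nbij' Neg.neg Neg.neg hneg hneg (fun k _ => neg_neg k) (fun k _ => neg_neg k)
    fun k _ => ?_
  simp_rw [← pentagonal_neg_eq_iff, neg_neg, Int.natAbs_neg]
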